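/- arXiv:1905.09316 — 3 statements merged into one kernel-verified Lean document; each statement's English description precedes it below -/
import Mathlib

section
/- Let k be a field, G a group, K ≤ G a subgroup, and V a finite-dimensional k-linear representation of K; let V̌ = Hom_k(V, k) be its full linear dual with the contragredient K-action. Then the formula ⟨f̌, f⟩ = Σ_{Kg ∈ K\G} ⟨f̌(g), f(g)⟩ (a finite sum, since f is supported on finitely many cosets Kg, and independent of the choice of coset representatives) defines a G-invariant k-bilinear pairing I_K^G V̌ × ind_K^G V → k, and the induced k-linear map I_K^G V̌ → Hom_k(ind_K^G V, k) is a G-equivariant isomorphism onto the full linear dual of ind_K^G V equipped with the contragredient G-action. -/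
open scoped BigOperators

noncomputable section

universe u

variable {k : Type u} [Field k] {G : Type u} [Group G]

/-- The full induction `I_K^G W`: all functions `f : G → W` with `f (κ g) = κ • f g`,
with `G` acting by right translation. -/
def IndFull (k : Type u) [Field k] {G : Type u} [Group G] (K : Subgroup G)
    {W : Type u} [AddCommGroup W] [Module k W] (ρ : Representation k ↥K W) :
    Submodule k (G → W) where
  carrier := {f | ∀ (κ : ↥K) (g : G), f ((κ : G) * g) = ρ κ (f g)}
  add_mem' := by
    intro f g hf hg κ x
    simp [hf κ x, hg κ x]
  zero_mem' := by intro κ x; simp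
  smul_mem' := by
    intro c f hf κ x
    simp [hf κ x]

/-- Functions whose support is contained in finitely many right cosets `Kg`. -/
def FinOnCosets (k : Type u) [Field k] {G : Type u} [Group G] (K : Subgroup G)
    (W : Type u) [AddCommGroup W] [Module k W] : Submodule k (G → W) where
  carrier := {f | (Quotient.mk (QuotientGroup.rightRel K) '' Function.support f).Finite}
  add_mem' := by
    intro f g hf hg
    refine Set.Finite.subset (hf.union hg) ?_
    rw [← Set.image_union]
    exact Set.image_mono (Function.support_add f g)
  zero_mem' := by simp
  smul_mem' := by
    intro c f hf
    refine Set.Finite.subset hf (Set.image_mono ?_)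
    intro x hx
    simp only [Function.mem_support, Pi.smul_apply] at hx ⊢
    intro h
    exact hx (by rw [h, smul_zero])

/-!
A functional on `ind_K^G V` is determined by its values on the functions supported on a single
coset `K g`, and those with value `v` at `g` depend linearly on `v`; restricting a functional `Λ`
to them gives `g ↦ Λ ∘ single g ∈ I_K^G V̌`, which inverts the pairing because every element of
`ind_K^G V` is a finite sum of such single-coset functions. The summand `⟨f̌(x), f(x)⟩` is constant
on cosets since `K` acts on `V̌` contragrediently, and equivariance is the reindexing of the
sum over `K\G` by right multiplication.
-/

open Function

def rightCosetsMulRight (K : Subgroup G) (g : G) :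
    Quotient (QuotientGroup.rightRel K) ≃ Quotient (QuotientGroup.rightRel K) :=
  Quotient.congr (Equiv.mulRight g) fun a b => by
    simp only [Equiv.coe_mulRight, QuotientGroup.rightRel_apply,
      show b * g * (a * g)⁻¹ = b * a⁻¹ by group]

section

variable {K : Subgroup G}

local notation "Q" => Quotient (QuotientGroup.rightRel K)
local notation "mkq" => Quotient.mk (QuotientGroup.rightRel K)

lemma rightCosetsMulRight_mk (g x : G) : rightCosetsMulRight K g (mkq x) = mkq (x * g) := rfl

lemma IndFull.translate_mem {W : Type u} [AddCommGroup W] [Module k W]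
    {ρ : Representation k K W} {f : G → W} (hf : f ∈ IndFull k K ρ) (g : G) :
    (fun x => f (x * g)) ∈ IndFull k K ρ :=
  fun κ x => by simpa only [mul_assoc] using hf κ (x * g)

lemma FinOnCosets.translate_mem {W : Type u} [AddCommGroup W] [Module k W]
    {f : G → W} (hf : f ∈ FinOnCosets k K W) (g : G) :
    (fun x => f (x * g)) ∈ FinOnCosets k K W := by
  refine (hf.image (rightCosetsMulRight K g⁻¹)).subset ?_
  rintro _ ⟨x, hx, rfl⟩
  exact ⟨mkq (x * g), ⟨x * g, hx, rfl⟩, by rw [rightCosetsMulRight_mk, mul_inv_cancel_right]⟩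

namespace IndFull

variable {V : Type u} [AddCommGroup V] [Module k V] (ρ : Representation k K V)

local notation "Ind" => (IndFull k K ρ ⊓ FinOnCosets k K V : Submodule k (G → V))

lemma apply_apply_eq_of_mkq_eq {fc : G → Module.Dual k V} {f : G → V}
    (hfc : fc ∈ IndFull k K ρ.dual) (hf : f ∈ IndFull k K ρ) {a b : G} (h : mkq a = mkq b) :
    fc a (f a) = fc b (f b) := by
  obtain ⟨κ, rfl⟩ : ∃ κ : K, (κ : G) * a = b :=
    ⟨⟨b * a⁻¹, QuotientGroup.rightRel_apply.1 (Quotient.exact h)⟩, by simp⟩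
  simp [hfc κ a, hf κ a, Representation.dual_apply, Module.Dual.transpose_apply]

open Classical in
def single (g : G) (v : V) : G → V :=
  fun x => if h : x * g⁻¹ ∈ K then ρ ⟨x * g⁻¹, h⟩ v else 0

lemma single_self (g : G) (v : V) : single ρ g v g = v := by
  have h1 : g * g⁻¹ ∈ K := (mul_inv_cancel g).symm ▸ K.one_mem
  rw [single, dif_pos h1, show (⟨g * g⁻¹, h1⟩ : K) = 1 from Subtype.ext (mul_inv_cancel g),
    map_one, Module.End.one_apply]

lemma mkq_eq_of_single_ne_zero {g x : G} {v : V} (hx : single ρ g v x ≠ 0) : mkq x = mkq g := by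
  by_contra hne
  refine hx (dif_neg fun h => hne (Quotient.sound ?_).symm)
  exact QuotientGroup.rightRel_apply.2 h

lemma single_apply_of_mem {f : G → V} (hf : f ∈ IndFull k K ρ) {g x : G} (h : mkq x = mkq g) :
    single ρ g (f g) x = f x := by
  have hx : x * g⁻¹ ∈ K := QuotientGroup.rightRel_apply.1 (Quotient.exact h.symm)
  rw [single, dif_pos hx, ← hf, inv_mul_cancel_right]

lemma single_mul_left (κ : K) (g : G) (v : V) :
    single ρ (κ * g) v = single ρ g (ρ κ⁻¹ v) := by
  funext x
  have hx : x * ((κ : G) * g)⁻¹ = x * g⁻¹ * (κ : G)⁻¹ := by group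
  have hmem : x * ((κ : G) * g)⁻¹ ∈ K ↔ x * g⁻¹ ∈ K := by
    rw [hx, K.mul_mem_cancel_right (K.inv_mem κ.2)]
  by_cases h : x * g⁻¹ ∈ K
  · rw [single, single, dif_pos (hmem.2 h), dif_pos h, ← Module.End.mul_apply, ← map_mul]
    exact congrArg (ρ · v) (Subtype.ext hx)
  · rw [single, single, dif_neg (mt hmem.1 h), dif_neg h]

lemma single_mem (g : G) (v : V) : single ρ g v ∈ Ind := by
  refine ⟨fun κ x => ?_, (Set.finite_singleton (mkq g)).subset ?_⟩
  · by_cases h : x * g⁻¹ ∈ K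
    · rw [single, single, dif_pos h, dif_pos (by rw [mul_assoc]; exact K.mul_mem κ.2 h),
        ← Module.End.mul_apply, ← map_mul]
      exact congrArg (ρ · v) (Subtype.ext (mul_assoc _ _ _))
    · simp [single, h, mul_assoc, K.mul_mem_cancel_left κ.2]
  · rintro _ ⟨x, hx, rfl⟩
    exact mkq_eq_of_single_ne_zero ρ hx

def singleₗ (g : G) : V →ₗ[k] Ind where
  toFun v := ⟨single ρ g v, single_mem ρ g v⟩
  map_add' v w := by
    ext x
    by_cases h : x * g⁻¹ ∈ K <;> simp [single, h]
  map_smul' c v := by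
    ext x
    by_cases h : x * g⁻¹ ∈ K <;> simp [single, h]

@[simp]
lemma coe_singleₗ (g : G) (v : V) : (singleₗ ρ g v : G → V) = single ρ g v := rfl

lemma singleₗ_mul_left (κ : K) (g : G) : singleₗ ρ (κ * g) = singleₗ ρ g ∘ₗ ρ κ⁻¹ :=
  LinearMap.ext fun v => Subtype.ext (single_mul_left ρ κ g v)

lemma sum_singleₗ_out (f : Ind) :
    ∑ q ∈ f.2.2.toFinset, singleₗ ρ q.out (f.1 q.out) = f := by
  ext x
  simp only [AddSubmonoidClass.coe_finsetSum, Finset.sum_apply, coe_singleₗ]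
  have hvanish : ∀ q ≠ mkq x, single ρ q.out (f.1 q.out) x = 0 := fun q hq => by
    by_contra h
    exact hq ((mkq_eq_of_single_ne_zero ρ h).trans (Quotient.out_eq q)).symm
  by_cases hx : mkq x ∈ f.2.2.toFinset
  · rw [Finset.sum_eq_single_of_mem _ hx fun q _ => hvanish q]
    exact single_apply_of_mem ρ f.2.1 (Quotient.out_eq _).symm
  · rw [Finset.sum_eq_zero fun q hq => hvanish q (by rintro rfl; exact hx hq)]
    by_contra h
    exact hx ((Set.Finite.mem_toFinset _).2 ⟨x, Ne.symm h, rfl⟩)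

variable (K) in
def cosetPairing (fc : G → Module.Dual k V) (f : G → V) (q : Q) : k :=
  fc q.out (f q.out)

variable {ρ}

lemma cosetPairing_eq {fc : G → Module.Dual k V} {f : G → V} (hfc : fc ∈ IndFull k K ρ.dual)
    (hf : f ∈ IndFull k K ρ) {x : G} {q : Q} (hx : mkq x = q) :
    cosetPairing K fc f q = fc x (f x) :=
  apply_apply_eq_of_mkq_eq ρ hfc hf (by rw [Quotient.out_eq, hx])

lemma support_cosetPairing_subset (fc : G → Module.Dual k V) (f : G → V) :
    (cosetPairing K fc f).support ⊆ mkq '' f.support := fun q hq =>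
  ⟨q.out, fun h => hq (by rw [cosetPairing, h, map_zero]), Quotient.out_eq q⟩

lemma hasFiniteSupport_cosetPairing (fc : G → Module.Dual k V) {f : G → V}
    (hf : f ∈ FinOnCosets k K V) : (cosetPairing K fc f).HasFiniteSupport :=
  hf.subset (support_cosetPairing_subset fc f)

variable (ρ)

def dualPairing : IndFull k K ρ.dual →ₗ[k] Module.Dual k Ind :=
  LinearMap.mk₂ k (fun fc f => ∑ᶠ q, cosetPairing K fc.1 f.1 q)
    (fun fc fc' f => finsum_add_distrib (hasFiniteSupport_cosetPairing _ f.2.2)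
      (hasFiniteSupport_cosetPairing _ f.2.2))
    (fun c fc f => (smul_finsum' c (hasFiniteSupport_cosetPairing _ f.2.2)).symm)
    (fun fc f f' => by
      simp only [cosetPairing, Submodule.coe_add, Pi.add_apply, map_add]
      exact finsum_add_distrib (hasFiniteSupport_cosetPairing _ f.2.2)
        (hasFiniteSupport_cosetPairing _ f'.2.2))
    (fun c fc f => by
      simp only [cosetPairing, Submodule.coe_smul, Pi.smul_apply, map_smul]
      exact (smul_finsum' c (hasFiniteSupport_cosetPairing _ f.2.2)).symm)

lemma dualPairing_apply (fc : IndFull k K ρ.dual) (f : Ind) :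
    dualPairing ρ fc f = ∑ᶠ q, cosetPairing K fc.1 f.1 q := rfl

lemma dualPairing_eq_finsum_section (σ : Q → G) (hσ : ∀ q, mkq (σ q) = q)
    (fc : IndFull k K ρ.dual) (f : Ind) :
    dualPairing ρ fc f = ∑ᶠ q, fc.1 (σ q) (f.1 (σ q)) :=
  finsum_congr fun q => cosetPairing_eq fc.2 f.2.1 (hσ q)

lemma dualPairing_singleₗ (fc : IndFull k K ρ.dual) (g : G) (v : V) :
    dualPairing ρ fc (singleₗ ρ g v) = fc.1 g v := by
  rw [dualPairing_apply, coe_singleₗ, finsum_eq_single _ (mkq g) fun q hq => ?_,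
    cosetPairing_eq fc.2 (single_mem ρ g v).1 rfl, single_self]
  by_contra h
  have hne : single ρ g v q.out ≠ 0 := fun h0 => h (by rw [cosetPairing, h0, map_zero])
  exact hq ((mkq_eq_of_single_ne_zero ρ hne).symm.trans (Quotient.out_eq q)).symm

lemma dualPairing_injective : Injective (dualPairing ρ) := by
  refine (injective_iff_map_eq_zero _).2 fun fc hfc => ?_
  ext g v
  simpa [hfc] using (dualPairing_singleₗ ρ fc g v).symm

lemma comp_singleₗ_mem (Λ : Module.Dual k Ind) :
    (fun g => Λ ∘ₗ singleₗ ρ g) ∈ IndFull k K ρ.dual := fun κ g => by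
  change Λ ∘ₗ singleₗ ρ (κ * g) = ρ.dual κ (Λ ∘ₗ singleₗ ρ g)
  rw [singleₗ_mul_left, Representation.dual_apply]
  rfl

lemma dualPairing_surjective : Surjective (dualPairing ρ) := by
  intro Λ
  refine ⟨⟨_, comp_singleₗ_mem ρ Λ⟩, LinearMap.ext fun f => ?_⟩
  have hsupp : (cosetPairing K (fun g => Λ ∘ₗ singleₗ ρ g) f.1).support ⊆ f.2.2.toFinset :=
    fun q hq => (Set.Finite.mem_toFinset _).2 (support_cosetPairing_subset _ _ hq)
  rw [dualPairing_apply, finsum_eq_finsetSum_of_support_subset _ hsupp]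
  conv_rhs => rw [← sum_singleₗ_out ρ f, map_sum]
  rfl

lemma dualPairing_translate (g : G) (fc : IndFull k K ρ.dual)
    (h1 : (fun x => fc.1 (x * g)) ∈ IndFull k K ρ.dual) (f : Ind)
    (h2 : (fun x => f.1 (x * g⁻¹)) ∈ Ind) :
    dualPairing ρ ⟨fun x => fc.1 (x * g), h1⟩ f =
      dualPairing ρ fc ⟨fun x => f.1 (x * g⁻¹), h2⟩ := by
  rw [dualPairing_apply, dualPairing_apply, ← finsum_comp_equiv (rightCosetsMulRight K g)
    (f := cosetPairing K fc.1 fun x => f.1 (x * g⁻¹))]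
  refine finsum_congr fun q => ?_
  have hq : mkq (q.out * g) = rightCosetsMulRight K g q := by
    rw [← rightCosetsMulRight_mk, Quotient.out_eq]
  rw [cosetPairing_eq fc.2 h2.1 hq]
  simp only [cosetPairing, mul_inv_cancel_right]

end IndFull

end

theorem stmt0_general (K : Subgroup G) (V : Type u) [AddCommGroup V] [Module k V]
    (ρ : Representation k ↥K V) :
    (∀ (g : G) (f : G → Module.Dual k V), f ∈ IndFull k K ρ.dual →
      (fun x => f (x * g)) ∈ IndFull k K ρ.dual) ∧
    (∀ (g : G) (f : G → V), f ∈ IndFull k K ρ ⊓ FinOnCosets k K V →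
      (fun x => f (x * g)) ∈ IndFull k K ρ ⊓ FinOnCosets k K V) ∧
    (∃ Φ : ↥(IndFull k K ρ.dual) →ₗ[k] Module.Dual k ↥(IndFull k K ρ ⊓ FinOnCosets k K V),
      Function.Bijective Φ ∧
      (∀ σ : Quotient (QuotientGroup.rightRel K) → G,
        (∀ q, Quotient.mk (QuotientGroup.rightRel K) (σ q) = q) →
        ∀ (fc : ↥(IndFull k K ρ.dual)) (f : ↥(IndFull k K ρ ⊓ FinOnCosets k K V)),
          Φ fc f = ∑ᶠ q : Quotient (QuotientGroup.rightRel K), (fc.1 (σ q)) (f.1 (σ q))) ∧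
      (∀ (g : G) (fc : ↥(IndFull k K ρ.dual))
        (h1 : (fun x => fc.1 (x * g)) ∈ IndFull k K ρ.dual)
        (f : ↥(IndFull k K ρ ⊓ FinOnCosets k K V))
        (h2 : (fun x => f.1 (x * g⁻¹)) ∈ IndFull k K ρ ⊓ FinOnCosets k K V),
        Φ ⟨fun x => fc.1 (x * g), h1⟩ f = Φ fc ⟨fun x => f.1 (x * g⁻¹), h2⟩)) := by
  refine ⟨fun g f hf => IndFull.translate_mem hf g,
    fun g f hf => ⟨IndFull.translate_mem hf.1 g, FinOnCosets.translate_mem hf.2 g⟩,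
    IndFull.dualPairing ρ, ⟨IndFull.dualPairing_injective ρ, IndFull.dualPairing_surjective ρ⟩,
    fun σ hσ => IndFull.dualPairing_eq_finsum_section ρ σ hσ,
    fun g => IndFull.dualPairing_translate ρ g⟩

/-- Let `K ≤ G` and let `V` be a finite-dimensional `k`-linear representation
of `K`, with full linear dual `V̌` carrying the contragredient action `ρ.dual`.  Then:
(1),(2): both `I_K^G V̌` and `ind_K^G V` are stable under right translation by `G`; and
(3): the formula `⟨fc, f⟩ = Σ_{Kg ∈ K\G} ⟨fc(g), f(g)⟩` (a finite sum over the right cosets,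
independent of the chosen coset representatives — we quantify over all sections `σ` of
`G → K\G`) defines a `k`-linear map `Φ : I_K^G V̌ → Hom_k(ind_K^G V, k)` which is bijective
and `G`-equivariant for the contragredient `G`-action on the dual:
`Φ(g·fc)(f) = Φ(fc)(g⁻¹·f)` where `(g·f)(x) = f(xg)`. -/
theorem stmt0 (K : Subgroup G) (V : Type u) [AddCommGroup V] [Module k V]
    [FiniteDimensional k V] (ρ : Representation k ↥K V) :
    (∀ (g : G) (f : G → Module.Dual k V), f ∈ IndFull k K ρ.dual →
      (fun x => f (x * g)) ∈ IndFull k K ρ.dual) ∧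
    (∀ (g : G) (f : G → V), f ∈ IndFull k K ρ ⊓ FinOnCosets k K V →
      (fun x => f (x * g)) ∈ IndFull k K ρ ⊓ FinOnCosets k K V) ∧
    (∃ Φ : ↥(IndFull k K ρ.dual) →ₗ[k] Module.Dual k ↥(IndFull k K ρ ⊓ FinOnCosets k K V),
      Function.Bijective Φ ∧
      (∀ σ : Quotient (QuotientGroup.rightRel K) → G,
        (∀ q, Quotient.mk (QuotientGroup.rightRel K) (σ q) = q) →
        ∀ (fc : ↥(IndFull k K ρ.dual)) (f : ↥(IndFull k K ρ ⊓ FinOnCosets k K V)),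
          Φ fc f = ∑ᶠ q : Quotient (QuotientGroup.rightRel K), (fc.1 (σ q)) (f.1 (σ q))) ∧
      (∀ (g : G) (fc : ↥(IndFull k K ρ.dual))
        (h1 : (fun x => fc.1 (x * g)) ∈ IndFull k K ρ.dual)
        (f : ↥(IndFull k K ρ ⊓ FinOnCosets k K V))
        (h2 : (fun x => f.1 (x * g⁻¹)) ∈ IndFull k K ρ ⊓ FinOnCosets k K V),
        Φ ⟨fun x => fc.1 (x * g), h1⟩ f = Φ fc ⟨fun x => f.1 (x * g⁻¹), h2⟩)) :=
  stmt0_general K V ρ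
end
end

section
/- Let p be a prime and let (N, ω) be a p-valued group. Let N₁, N₂, N₃ ≤ N be subgroups such that the multiplication map N₁ × N₂ × N₃ → N, (n₁, n₂, n₃) ↦ n₁n₂n₃, is a bijection, and such that ω(n₁n₂n₃) = min{ω(n₁), ω(n₂), ω(n₃)} for all n₁ ∈ N₁, n₂ ∈ N₂, n₃ ∈ N₃ (with the convention ω(1) = +∞). Equip each N_j with the restriction of ω. Then for every v > 0 the inclusions N_j ⊆ N induce an isomorphism of 𝔽_p-vector spaces gr_v N₁ ⊕ gr_v N₂ ⊕ gr_v N₃ ≅ gr_v N, and summing over v > 0 these give an isomorphism of 𝔽_p[π]-modules gr N₁ ⊕ gr N₂ ⊕ gr N₃ ≅ gr N. -/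
open scoped ENNReal

/-- A `p`-valuation `ω` on a group `N` (Lazard).  We encode `ω : N → ℝ≥0∞` with the
convention `ω x = ∞ ↔ x = 1`, so that the axioms, required in the paper only for
`x, y ≠ 1`, can be stated unconditionally.  For `x ≠ 1` the value `ω x` is a real number
in the interval `(1/(p-1), ∞)`. -/
structure IsPValuation (p : ℕ) {N : Type*} [Group N] (ω : N → ℝ≥0∞) : Prop where
  eq_top_iff : ∀ x, ω x = ⊤ ↔ x = 1
  one_div_lt : ∀ x, x ≠ 1 → 1 / ((p : ℝ≥0∞) - 1) < ω x
  inv_mul : ∀ x y, min (ω x) (ω y) ≤ ω (x⁻¹ * y)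
  commutator : ∀ x y, ω x + ω y ≤ ω (x * y * x⁻¹ * y⁻¹)
  pow_p : ∀ x, ω (x ^ p) = ω x + 1

open scoped commutatorElement

/-!
Parts (1), (2), (4), (5) are formal: `N_{v+}` is normal, `N_v / N_{v+}` is abelian since
`ω ⁅x, y⁆ ≥ ω x + ω y`, and the hypotheses on `N₁, N₂, N₃` give injectivity and surjectivity.

The content is (3): `(ab)ᵖ ≡ aᵖbᵖ` modulo `N_{(v+1)+}` for `a, b ∈ N_v`. The subgroups
`G i = {x | i v ≤ ω x, i / (p - 1) < ω x}` form a Lazard N-series (`⁅G i, G j⁆ ≤ G (i + j)`)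
with `N_v ≤ G 1`, `G p ≤ N_{(v+1)+}` and `(G 2)ᵖ ⊆ N_{(v+1)+}`, so it suffices to show
`(ab)ᵖ = aᵖbᵖ` in a group with an N-series such that `G p = ⊥` and `(G 2)ᵖ = 1`. This is a
Hall–Petrescu collection argument: `(ab)ⁿ = aⁿbⁿ Z n`, where `Z` is a product of sequences
`n ↦ t ^ n.choose e` with `t ∈ G w`, `2 ≤ w` and `e ≤ w`, because such "polynomial
sequences" are closed under commutators and partial products (by downward induction on the
weight, starting from `G p = ⊥`). At `n = p` every factor vanishes: either `p ≤ w`, or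
`0 < e < p`, so `p ∣ p.choose e` and `t ∈ G 2`.
-/

section NSeries

variable {N : Type*} [Group N]

structure IsNSeries (G : ℕ → Subgroup N) : Prop where
  antitone : Antitone G
  commutator_le : ∀ i j, ⁅G i, G j⁆ ≤ G (i + j)

theorem IsNSeries.commutatorElement_mem {G : ℕ → Subgroup N} (hG : IsNSeries G) {i j : ℕ}
    {x y : N} (hx : x ∈ G i) (hy : y ∈ G j) : ⁅x, y⁆ ∈ G (i + j) :=
  hG.commutator_le i j (Subgroup.commutator_mem_commutator hx hy)

theorem IsNSeries.map {G : ℕ → Subgroup N} (hG : IsNSeries G) {M : Type*} [Group M]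
    (f : N →* M) : IsNSeries fun i => (G i).map f where
  antitone _ _ h := Subgroup.map_mono (hG.antitone h)
  commutator_le i j := by
    rw [← Subgroup.map_commutator]
    exact Subgroup.map_mono (hG.commutator_le i j)

def descProd (F : ℕ → N) : ℕ → N
  | 0 => 1
  | n + 1 => F n * descProd F n

@[simp] theorem descProd_zero (F : ℕ → N) : descProd F 0 = 1 := rfl

@[simp] theorem descProd_succ (F : ℕ → N) (n : ℕ) :
    descProd F (n + 1) = F n * descProd F n := rfl

theorem descProd_pow_choose (t : N) (e n : ℕ) :
    descProd (fun j => t ^ j.choose e) n = t ^ n.choose (e + 1) := by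
  induction n with
  | zero => simp
  | succ n ih => rw [descProd_succ, ih, ← pow_add, Nat.choose_succ_succ]

theorem descProd_mul (A B : ℕ → N) (n : ℕ) :
    descProd (fun j => A j * B j) n = descProd A n * descProd B n *
      descProd (fun j => (descProd B (j + 1))⁻¹ * ⁅(descProd A j)⁻¹, B j⁆ * descProd B (j + 1))
        n := by
  induction n with
  | zero => simp
  | succ n ih =>
    simp only [descProd_succ, ih, commutatorElement_def]
    group

theorem eq_descProd_mul_mul_inv {φ H K : ℕ → N} (h : ∀ n, φ (n + 1) = H n * φ n * K n)
    (n : ℕ) : φ n = descProd H n * φ 0 * (descProd (fun j => (K j)⁻¹) n)⁻¹ := by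
  induction n with
  | zero => simp
  | succ n ih =>
    rw [h, ih]
    simp only [descProd_succ]
    group

theorem pow_choose_succ_eq (t : N) (e n : ℕ) :
    t ^ (n + 1).choose e = t ^ n.choose e * t ^ ((n + 1).choose e - n.choose e) := by
  rw [← pow_add, Nat.add_sub_cancel' (Nat.choose_le_succ n e)]

theorem commutatorElement_mul_mul (a b c d : N) : ⁅a * b, c * d⁆ =
    a * ⁅b, c⁆ * a⁻¹ * (a * c * ⁅b, d⁆ * (a * c)⁻¹) * ⁅a, c⁆ * (c * ⁅a, d⁆ * c⁻¹) := by
  simp only [commutatorElement_def]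
  group

/-- Polynomial sequences in Hall's sense, graded by the N-series `G`: every factor
`n ↦ t ^ n.choose e` has weight `w' ≥ w` (`t ∈ G w'`) exceeding its degree `e` by at least `s`. -/
inductive IsPolySeq (G : ℕ → Subgroup N) (s w : ℕ) : (ℕ → N) → Prop
  | pow_choose {w' : ℕ} {t : N} (e : ℕ) (ht : t ∈ G w') (hw : w ≤ w') (he : e + s ≤ w') :
      IsPolySeq G s w fun n => t ^ n.choose e
  | mul {F F' : ℕ → N} : IsPolySeq G s w F → IsPolySeq G s w F' →
      IsPolySeq G s w fun n => F n * F' n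

namespace IsPolySeq

variable {G : ℕ → Subgroup N} {s w : ℕ} {F : ℕ → N}

theorem congr {F' : ℕ → N} (hF : IsPolySeq G s w F) (h : ∀ n, F n = F' n) :
    IsPolySeq G s w F' :=
  funext h ▸ hF

theorem mono {s' w' : ℕ} (hF : IsPolySeq G s w F) (hs : s' ≤ s) (hw : w' ≤ w) :
    IsPolySeq G s' w' F := by
  induction hF with
  | pow_choose e ht hw'' he => exact pow_choose e ht (hw.trans hw'') (by omega)
  | mul _ _ ih ih' => exact ih.mul ih'

theorem const {w' : ℕ} {c : N} (hc : c ∈ G w') (hw : w ≤ w') (hs : s ≤ w') :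
    IsPolySeq G s w fun _ => c :=
  (pow_choose 0 hc hw (by omega)).congr fun n => by simp

theorem one : IsPolySeq G s w fun _ => 1 :=
  const (G (w + s)).one_mem (by omega) (by omega)

theorem inv (hF : IsPolySeq G s w F) : IsPolySeq G s w fun n => (F n)⁻¹ := by
  induction hF with
  | pow_choose e ht hw he =>
    exact (pow_choose e (inv_mem ht) hw he).congr fun n => inv_pow _ _
  | mul _ _ ih ih' => exact (ih'.mul ih).congr fun n => (mul_inv_rev _ _).symm

theorem mem (hG : Antitone G) (hF : IsPolySeq G s w F) (n : ℕ) : F n ∈ G w := by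
  induction hF with
  | pow_choose e ht hw he => exact pow_mem (hG hw ht) _
  | mul _ _ ih ih' => exact mul_mem ih ih'

theorem apply_prime {p : ℕ} (hG : Antitone G) (hp : p.Prime) (hGp : G p = ⊥)
    (hpow : ∀ t ∈ G 2, t ^ p = 1) (hw : 2 ≤ w) (hF : IsPolySeq G 0 w F) : F p = F 0 := by
  induction hF with
  | mul _ _ ih ih' => exact congr($ih * $ih')
  | @pow_choose w' t e ht hww he =>
    dsimp only
    rcases Nat.eq_zero_or_pos e with rfl | he₀
    · simp
    rcases lt_or_ge e p with hep | hpe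
    · obtain ⟨q, hq⟩ := hp.dvd_choose_self he₀.ne' hep
      rw [hq, pow_mul', hpow _ (pow_mem (hG (hw.trans hww) ht) q), Nat.choose_eq_zero_of_lt he₀,
        pow_zero]
    · have : t ∈ G p := hG (by omega) ht
      rw [hGp, Subgroup.mem_bot] at this
      simp [this]

end IsPolySeq

def DescProdStable (G : ℕ → Subgroup N) (k : ℕ) : Prop :=
  ∀ s w (F : ℕ → N), k ≤ w → 1 ≤ w → IsPolySeq G (s + 1) w F → IsPolySeq G s w (descProd F)

def CommStable (G : ℕ → Subgroup N) (k : ℕ) : Prop :=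
  ∀ s₁ w₁ s₂ w₂ (F₁ F₂ : ℕ → N), k ≤ w₁ + w₂ → 1 ≤ w₁ → 1 ≤ w₂ →
    IsPolySeq G s₁ w₁ F₁ → IsPolySeq G s₂ w₂ F₂ →
    IsPolySeq G (s₁ + s₂) (w₁ + w₂) fun n => ⁅F₁ n, F₂ n⁆

def PowChooseCommStable (G : ℕ → Subgroup N) (k d : ℕ) : Prop :=
  ∀ e₁ e₂ s₁ s₂ w₁ w₂ (t u : N), e₁ + e₂ < d → t ∈ G w₁ → u ∈ G w₂ →
    e₁ + s₁ ≤ w₁ → e₂ + s₂ ≤ w₂ → 1 ≤ w₁ → 1 ≤ w₂ → k ≤ w₁ + w₂ →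
    IsPolySeq G (s₁ + s₂) (w₁ + w₂) fun n => ⁅t ^ n.choose e₁, u ^ n.choose e₂⁆

variable {G : ℕ → Subgroup N} {k : ℕ}

theorem CommStable.conj (hC : CommStable G k) {sY wY sX wX : ℕ} {Y X : ℕ → N}
    (hY : IsPolySeq G sY wY Y) (hX : IsPolySeq G sX wX X) (hwY : 1 ≤ wY) (hwX : 1 ≤ wX)
    (hk : k ≤ wY + wX) : IsPolySeq G sX wX fun n => Y n * X n * (Y n)⁻¹ :=
  (((hC _ _ _ _ _ _ hk hwY hwX hY hX).mono (by omega) (by omega)).mul hX).congr fun n => by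
    simp [commutatorElement_def]

theorem CommStable.conj_inv (hC : CommStable G k) {sY wY sX wX : ℕ} {Y X : ℕ → N}
    (hY : IsPolySeq G sY wY Y) (hX : IsPolySeq G sX wX X) (hwY : 1 ≤ wY) (hwX : 1 ≤ wX)
    (hk : k ≤ wY + wX) : IsPolySeq G sX wX fun n => (Y n)⁻¹ * X n * Y n :=
  (hC.conj hY.inv hX hwY hwX hk).congr fun n => by rw [inv_inv]

theorem DescProdStable.of_succ (hQ : DescProdStable G (k + 1)) (hC : CommStable G (k + 1)) :
    DescProdStable G k := by
  intro s w F hk hw hF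
  induction hF with
  | pow_choose e ht hw' he =>
    exact (IsPolySeq.pow_choose (e + 1) ht hw' (by omega)).congr fun n =>
      (descProd_pow_choose _ e n).symm
  | @mul A B hA hB ihA ihB =>
    have hB' : IsPolySeq G s w fun j => descProd B (j + 1) :=
      (hB.mono (s' := s) (by omega) le_rfl).mul ihB
    have hcomm := hC _ _ _ _ _ _ (by omega) hw hw ihA.inv hB
    have hcorr := hQ s (w + w) _ (by omega) (by omega)
      ((hC.conj_inv hB' hcomm hw (by omega) (by omega)).mono (by omega) le_rfl)
    exact ((ihA.mul ihB).mul (hcorr.mono le_rfl (by omega))).congr fun n =>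
      (descProd_mul A B n).symm

theorem PowChooseCommStable.commutatorElement_diff {d : ℕ} (ih : PowChooseCommStable G k d)
    {e₁ e₂ s₁ s₂ w₁ w₂ : ℕ} {t u : N} (hd : e₁ + e₂ ≤ d) (ht : t ∈ G w₁) (hu : u ∈ G w₂)
    (hs₁ : e₁ + s₁ ≤ w₁) (hs₂ : e₂ + s₂ ≤ w₂) (hw₁ : 1 ≤ w₁) (hw₂ : 1 ≤ w₂)
    (hk : k ≤ w₁ + w₂) : IsPolySeq G (s₁ + 1 + s₂) (w₁ + w₂)
      fun n => ⁅t ^ ((n + 1).choose e₁ - n.choose e₁), u ^ n.choose e₂⁆ := by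
  cases e₁ with
  | zero => exact IsPolySeq.one.congr fun n => by simp
  | succ e₁ =>
    exact (ih e₁ e₂ (s₁ + 1) s₂ w₁ w₂ t u (by omega) ht hu (by omega) hs₂ hw₁ hw₂ hk).congr
      fun n => by rw [Nat.choose_succ_succ', Nat.add_sub_cancel]

theorem PowChooseCommStable.succ (hG : IsNSeries G) (hQ : DescProdStable G k)
    (hC : CommStable G (k + 1)) {d : ℕ} (ih : PowChooseCommStable G k d) :
    PowChooseCommStable G k (d + 1) := by
  intro e₁ e₂ s₁ s₂ w₁ w₂ t u hd ht hu hs₁ hs₂ hw₁ hw₂ hk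
  set A : ℕ → N := fun n => t ^ n.choose e₁
  set B : ℕ → N := fun n => t ^ ((n + 1).choose e₁ - n.choose e₁)
  set C : ℕ → N := fun n => u ^ n.choose e₂
  set D : ℕ → N := fun n => u ^ ((n + 1).choose e₂ - n.choose e₂)
  have hA : IsPolySeq G 0 1 A := .pow_choose e₁ ht hw₁ (by omega)
  have hC' : IsPolySeq G 0 1 C := .pow_choose e₂ hu hw₂ (by omega)
  have hBC : IsPolySeq G (s₁ + 1 + s₂) (w₁ + w₂) fun n => ⁅B n, C n⁆ :=
    ih.commutatorElement_diff (by omega) ht hu hs₁ hs₂ hw₁ hw₂ hk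
  have hBD : IsPolySeq G (s₁ + 1 + s₂) (w₁ + w₂) fun n => ⁅B n, D n⁆ := by
    cases e₂ with
    | zero => exact IsPolySeq.one.congr fun n => by simp [D]
    | succ e₂ =>
      exact ((ih.commutatorElement_diff (e₂ := e₂) (s₂ := s₂ + 1) (by omega) ht hu hs₁
        (by omega) hw₁ hw₂ hk).mono (by omega) le_rfl).congr fun n => by
          simp only [B, D, Nat.choose_succ_succ', Nat.add_sub_cancel]
  have hAD : IsPolySeq G (s₁ + s₂ + 1) (w₁ + w₂) fun n => ⁅A n, D n⁆ :=
    ((ih.commutatorElement_diff (by omega) hu ht hs₂ hs₁ hw₂ hw₁ (by omega)).inv.congr fun n =>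
      commutatorElement_inv _ _).mono (by omega) (by omega)
  have hH := (hC.conj hA hBC le_rfl (by omega) (by omega)).mul
    (hC.conj (hA.mul hC') hBD le_rfl (by omega) (by omega))
  have hK := hC.conj hC' hAD le_rfl (by omega) (by omega)
  have hφ₀ : IsPolySeq G (s₁ + s₂) (w₁ + w₂) fun _ => ⁅A 0, C 0⁆ :=
    .const (hG.commutatorElement_mem (pow_mem ht _) (pow_mem hu _)) le_rfl (by omega)
  -- `A (n + 1) = A n * B n` and `C (n + 1) = C n * D n` turn `⁅A (n + 1), C (n + 1)⁆` into
  -- `H n * ⁅A n, C n⁆ * K n`, where `H` and `K` only involve commutators of lower total degree.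
  refine (((hQ _ _ _ hk (by omega) (hH.mono (by omega) le_rfl)).mul hφ₀).mul
    (hQ _ _ _ hk (by omega) hK.inv).inv).congr fun n => ?_
  refine (eq_descProd_mul_mul_inv (φ := fun n => ⁅A n, C n⁆) (fun n => ?_) n).symm
  simp only [A, C, pow_choose_succ_eq t e₁, pow_choose_succ_eq u e₂]
  exact commutatorElement_mul_mul _ _ _ _

theorem CommStable.of_succ (hG : IsNSeries G) (hQ : DescProdStable G k)
    (hC : CommStable G (k + 1)) : CommStable G k := by
  have hpow (d : ℕ) : PowChooseCommStable G k d := by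
    induction d with
    | zero => intro _ _ _ _ _ _ _ _ hd; omega
    | succ d ih => exact ih.succ hG hQ hC
  intro s₁ w₁ s₂ w₂ F₁ F₂ hk hw₁ hw₂ hF₁ hF₂
  induction hF₁ with
  | mul hA _ _ ihB =>
    exact ((hC.conj hA ihB hw₁ (by omega) (by omega)).mul ‹_›).congr fun n =>
      (commutatorElement_mul_left_eq_conj_mul _ _ _).symm
  | pow_choose e₁ ht hw₁' he₁ =>
    induction hF₂ with
    | mul hA _ ihA ihB =>
      exact (ihA.mul (hC.conj hA ihB hw₂ (by omega) (by omega))).congr fun n => by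
        rw [commutatorElement_mul_right_eq_mul_conj]
        group
    | pow_choose e₂ hu hw₂' he₂ =>
      exact (hpow _ e₁ e₂ s₁ s₂ _ _ _ _ (Nat.lt_succ_self _) ht hu he₁ he₂ (by omega)
        (by omega) (by omega)).mono le_rfl (by omega)

theorem descProdStable_of_le (hG : IsNSeries G) {m : ℕ} (hm : G m = ⊥) (h : m ≤ k) :
    DescProdStable G k := by
  intro s w F hk _ hF
  have hF₁ (n : ℕ) : F n = 1 := by
    simpa [hm] using hG.antitone (h.trans hk) (hF.mem hG.antitone n)
  refine IsPolySeq.one.congr fun n => ?_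
  induction n with
  | zero => rfl
  | succ n ih => rw [descProd_succ, ← ih, hF₁, one_mul]

theorem commStable_of_le (hG : IsNSeries G) {m : ℕ} (hm : G m = ⊥) (h : m ≤ k) :
    CommStable G k := by
  intro s₁ w₁ s₂ w₂ F₁ F₂ hk _ _ hF₁ hF₂
  refine IsPolySeq.one.congr fun n => ?_
  have := hG.antitone (h.trans hk)
    (hG.commutatorElement_mem (hF₁.mem hG.antitone n) (hF₂.mem hG.antitone n))
  rw [hm, Subgroup.mem_bot] at this
  exact this.symm

theorem IsNSeries.stable (hG : IsNSeries G) {m : ℕ} (hm : G m = ⊥) (k : ℕ) :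
    DescProdStable G k ∧ CommStable G k := by
  rcases le_total m k with h | h
  · exact ⟨descProdStable_of_le hG hm h, commStable_of_le hG hm h⟩
  induction h using Nat.decreasingInduction with
  | self => exact ⟨descProdStable_of_le hG hm le_rfl, commStable_of_le hG hm le_rfl⟩
  | of_succ k _ ih =>
    have hQ := ih.1.of_succ ih.2
    exact ⟨hQ, ih.2.of_succ hG hQ⟩

theorem IsNSeries.mul_pow_eq (hG : IsNSeries G) {p : ℕ} (hp : p.Prime) (hGp : G p = ⊥)
    (hpow : ∀ t ∈ G 2, t ^ p = 1) {a b : N} (ha : a ∈ G 1) (hb : b ∈ G 1) :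
    (a * b) ^ p = a ^ p * b ^ p := by
  obtain ⟨hQ, hC⟩ := hG.stable hGp 0
  set u : ℕ → N := fun n => (b ^ n)⁻¹ * ⁅b⁻¹, (a ^ n)⁻¹⁆ * b ^ n
  have hu : IsPolySeq G 1 2 u := by
    have hb' : IsPolySeq G 1 1 fun _ => b⁻¹ := .const (inv_mem hb) le_rfl le_rfl
    have ha' : IsPolySeq G 0 1 fun n => (a ^ n)⁻¹ :=
      (IsPolySeq.pow_choose 1 (inv_mem ha) le_rfl le_rfl).congr fun n => by simp [inv_pow]
    have hbn : IsPolySeq G 0 1 fun n => b ^ n :=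
      (IsPolySeq.pow_choose 1 hb le_rfl le_rfl).congr fun n => by simp
    exact hC.conj_inv hbn (hC _ _ _ _ _ _ (by omega) le_rfl le_rfl hb' ha') le_rfl (by omega)
      (by omega)
  have hprod (n : ℕ) : a ^ n * b ^ n * descProd u n = (a * b) ^ n := by
    induction n with
    | zero => simp
    | succ n ih =>
      rw [descProd_succ, pow_succ' (a * b), ← ih]
      simp only [u, commutatorElement_def, pow_succ]
      group
  have hZ := (hQ _ _ _ (Nat.zero_le _) (by omega) hu).apply_prime hG.antitone hp hGp hpow le_rfl
  rw [← hprod p, hZ, descProd_zero, mul_one]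

theorem IsNSeries.mk_mul_pow (hG : IsNSeries G) {p : ℕ} (hp : p.Prime) {K : Subgroup N}
    [K.Normal] (hGK : G p ≤ K) (hpow : ∀ t ∈ G 2, t ^ p ∈ K) {a b : N} (ha : a ∈ G 1)
    (hb : b ∈ G 1) : (((a * b) ^ p : N) : N ⧸ K) = ((a ^ p * b ^ p : N) : N ⧸ K) := by
  have hGp : (G p).map (QuotientGroup.mk' K) = ⊥ := by
    rwa [Subgroup.map_eq_bot_iff, QuotientGroup.ker_mk']
  have hpow' : ∀ t ∈ (G 2).map (QuotientGroup.mk' K), t ^ p = 1 := by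
    rintro _ ⟨t, ht, rfl⟩
    rw [← map_pow, QuotientGroup.mk'_apply, QuotientGroup.eq_one_iff]
    exact hpow t ht
  simpa using (hG.map (QuotientGroup.mk' K)).mul_pow_eq hp hGp hpow' ⟨a, ha, rfl⟩ ⟨b, hb, rfl⟩

end NSeries

theorem ENNReal.add_one_lt_of_mul_le_of_div_lt {p : ℕ} (hp : 1 < p) {v a : ℝ≥0∞} (hv : v < ⊤)
    (h₁ : p * v ≤ a) (h₂ : p / (p - 1) < a) : v + 1 < a := by
  have hq₀ : (p : ℝ≥0∞) - 1 ≠ 0 := (tsub_pos_of_lt (by exact_mod_cast hp)).ne'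
  have hq : (p : ℝ≥0∞) = 1 + (p - 1) := (add_tsub_cancel_of_le (by exact_mod_cast hp.le)).symm
  rcases lt_or_ge 1 ((p - 1) * v) with h | h
  · calc v + 1 < v + (p - 1) * v := ENNReal.add_lt_add_left hv.ne h
      _ = p * v := by rw [hq, add_mul, one_mul, ENNReal.add_sub_cancel_left ENNReal.one_ne_top]
      _ ≤ a := h₁
  · refine lt_of_le_of_lt ((ENNReal.le_div_iff_mul_le (.inl hq₀) (.inl (by simp))).2 ?_) h₂
    calc (v + 1) * (p - 1) = (p - 1) * v + (p - 1) := by ring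
      _ ≤ 1 + (p - 1) := by gcongr
      _ = p := hq.symm

namespace IsPValuation

variable {p : ℕ} {N : Type*} [Group N] {ω : N → ℝ≥0∞} (hω : IsPValuation p ω)
include hω

theorem map_one : ω 1 = ⊤ := (hω.eq_top_iff 1).2 rfl

theorem map_inv (x : N) : ω x⁻¹ = ω x := by
  have h (y : N) : ω y ≤ ω y⁻¹ := by simpa [hω.map_one] using hω.inv_mul y 1
  exact le_antisymm (by simpa using h x⁻¹) (h x)

theorem min_le_map_mul (x y : N) : min (ω x) (ω y) ≤ ω (x * y) := by
  simpa [hω.map_inv] using hω.inv_mul x⁻¹ y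

theorem add_le_map_commutatorElement (x y : N) : ω x + ω y ≤ ω ⁅x, y⁆ :=
  commutatorElement_def x y ▸ hω.commutator x y

theorem le_map_conj (g x : N) : ω x ≤ ω (g * x * g⁻¹) := by
  have hcomm : ω x ≤ ω ⁅g, x⁆ := le_add_self.trans (hω.add_le_map_commutatorElement g x)
  simpa [commutatorElement_def] using (le_min hcomm le_rfl).trans (hω.min_le_map_mul ⁅g, x⁆ x)

def leSubgroup (r : ℝ≥0∞) : Subgroup N where
  carrier := {x | r ≤ ω x}
  mul_mem' hx hy := (le_min hx hy).trans (hω.min_le_map_mul _ _)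
  one_mem' := by simp [hω.map_one]
  inv_mem' := by simp [hω.map_inv]

def ltSubgroup (r : ℝ≥0∞) (hr : r < ⊤) : Subgroup N where
  carrier := {x | r < ω x}
  mul_mem' hx hy := (lt_min hx hy).trans_le (hω.min_le_map_mul _ _)
  one_mem' := by simpa [hω.map_one] using hr
  inv_mem' := by simp [hω.map_inv]

theorem mem_leSubgroup {r : ℝ≥0∞} {x : N} : x ∈ hω.leSubgroup r ↔ r ≤ ω x := Iff.rfl

theorem mem_ltSubgroup {r : ℝ≥0∞} {hr : r < ⊤} {x : N} : x ∈ hω.ltSubgroup r hr ↔ r < ω x :=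
  Iff.rfl

instance ltSubgroup_normal (r : ℝ≥0∞) (hr : r < ⊤) : (hω.ltSubgroup r hr).Normal where
  conj_mem x hx g := hx.trans_le (hω.le_map_conj g x)

theorem lt_map_inv_mul_iff {r : ℝ≥0∞} (hr : r < ⊤) {a b : N} :
    r < ω (a⁻¹ * b) ↔ (a : N ⧸ hω.ltSubgroup r hr) = b :=
  (QuotientGroup.eq (s := hω.ltSubgroup r hr)).symm

theorem mk_eq_one {r : ℝ≥0∞} (hr : r < ⊤) {x : N} (hx : r < ω x) :
    (x : N ⧸ hω.ltSubgroup r hr) = 1 :=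
  (QuotientGroup.eq_one_iff x).2 hx

theorem commute_mk {v : ℝ≥0∞} (hv₀ : 0 < v) (hv : v < ⊤) {x y : N} (hx : v ≤ ω x)
    (hy : v ≤ ω y) : Commute (x : N ⧸ hω.ltSubgroup v hv) (y : N ⧸ _) := by
  rw [← commutatorElement_eq_one_iff_commute, ← QuotientGroup.mk'_apply,
    ← QuotientGroup.mk'_apply, ← map_commutatorElement, QuotientGroup.mk'_apply,
    QuotientGroup.eq_one_iff, mem_ltSubgroup]
  exact (ENNReal.lt_add_right hv.ne hv₀.ne').trans_le
    ((add_le_add hx hy).trans (hω.add_le_map_commutatorElement x y))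

section WeightFiltration

/-- The strict bound `i / (p - 1) < ω x` is what gives `weightFiltration p ≤ N_{(v+1)+}` also
when `v ≤ 1 / (p - 1)`. -/
noncomputable def weightFiltration (hp : 1 < p) (v : ℝ≥0∞) (i : ℕ) : Subgroup N :=
  hω.leSubgroup (i * v) ⊓ hω.ltSubgroup (i / (p - 1))
    (ENNReal.div_lt_top (ENNReal.natCast_ne_top i) (tsub_pos_of_lt (by exact_mod_cast hp)).ne')

variable (hp : 1 < p) {v : ℝ≥0∞}

theorem mem_weightFiltration {i : ℕ} {x : N} :
    x ∈ hω.weightFiltration hp v i ↔ i * v ≤ ω x ∧ i / ((p : ℝ≥0∞) - 1) < ω x :=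
  Iff.rfl

theorem isNSeries_weightFiltration : IsNSeries (hω.weightFiltration hp v) where
  antitone i j hij x hx := by
    rw [mem_weightFiltration] at hx ⊢
    have hij' : (i : ℝ≥0∞) ≤ j := by exact_mod_cast hij
    exact ⟨(mul_le_mul_left hij' v).trans hx.1, (ENNReal.div_le_div_right hij' _).trans_lt hx.2⟩
  commutator_le i j := Subgroup.commutator_le.2 fun x hx y hy => by
    rw [mem_weightFiltration] at hx hy ⊢
    push_cast
    rw [add_mul, ENNReal.add_div]
    exact ⟨(add_le_add hx.1 hy.1).trans (hω.add_le_map_commutatorElement x y),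
      (ENNReal.add_lt_add hx.2 hy.2).trans_le (hω.add_le_map_commutatorElement x y)⟩

theorem leSubgroup_le_weightFiltration_one : hω.leSubgroup v ≤ hω.weightFiltration hp v 1 := by
  intro x hx
  rcases eq_or_ne x 1 with rfl | h
  · exact one_mem _
  · exact (hω.mem_weightFiltration hp).2
      ⟨by simpa using (hω.mem_leSubgroup).1 hx, by simpa using hω.one_div_lt x h⟩

theorem weightFiltration_le_ltSubgroup (hv : v + 1 < ⊤) :
    hω.weightFiltration hp v p ≤ hω.ltSubgroup (v + 1) hv := fun _ hx =>
  ENNReal.add_one_lt_of_mul_le_of_div_lt hp (ENNReal.add_lt_top.1 hv).1 hx.1 hx.2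

theorem pow_mem_ltSubgroup (hv₀ : 0 < v) (hv : v + 1 < ⊤) {t : N}
    (ht : t ∈ hω.weightFiltration hp v 2) : t ^ p ∈ hω.ltSubgroup (v + 1) hv := by
  have hv' : v < 2 * v := by
    rw [two_mul]
    exact ENNReal.lt_add_right (ENNReal.add_lt_top.1 hv).1.ne hv₀.ne'
  rw [mem_ltSubgroup, hω.pow_p]
  exact ENNReal.add_lt_add_right ENNReal.one_ne_top
    (hv'.trans_le (by simpa using ((hω.mem_weightFiltration hp).1 ht).1))

end WeightFiltration

theorem mk_mul_pow (hp : p.Prime) {v : ℝ≥0∞} (hv₀ : 0 < v) (hv : v + 1 < ⊤) {a b : N} (ha : v ≤ ω a)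
    (hb : v ≤ ω b) :
    (((a * b) ^ p : N) : N ⧸ hω.ltSubgroup (v + 1) hv) = ((a ^ p * b ^ p : N) : N ⧸ _) :=
  (hω.isNSeries_weightFiltration hp.one_lt).mk_mul_pow hp
    (hω.weightFiltration_le_ltSubgroup hp.one_lt hv)
    (fun _ => hω.pow_mem_ltSubgroup hp.one_lt hv₀ hv)
    (hω.leSubgroup_le_weightFiltration_one hp.one_lt ha)
    (hω.leSubgroup_le_weightFiltration_one hp.one_lt hb)

end IsPValuation

/-- Let `(N, ω)` be a `p`-valued group and `N₁, N₂, N₃ ≤ N` subgroups such that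
multiplication `N₁ × N₂ × N₃ → N` is a bijection and `ω (n₁n₂n₃) = min (ω n₁) (ω n₂) (ω n₃)`.
Then for every `0 < v < ∞` the inclusions induce an isomorphism of `𝔽_p`-vector spaces
`gr_v N₁ ⊕ gr_v N₂ ⊕ gr_v N₃ ≅ gr_v N`, and, summing over `v`, an isomorphism of
`𝔽_p[π]`-modules `gr N₁ ⊕ gr N₂ ⊕ gr N₃ ≅ gr N`.

Recall `N_v = {n | v ≤ ω n}`, `N_{v+} = {n | v < ω n}` and `gr_v N = N_v/N_{v+}`; the induced
map sends `([x₁], [x₂], [x₃])` to `[x₁x₂x₃]`, and `π [x] = [x^p]`.  We state the conclusion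
elementwise, on representatives:
(1) the map is well defined (changing each `xⱼ` within its class does not change the class of
    the product);
(2) the map is additive (a group homomorphism on each graded piece);
(3) the map commutes with the `π`-operators, i.e. with `[x] ↦ [xᵖ]` (so the sum over `v` is
    `𝔽_p[π]`-linear);
(4) the map is injective (trivial kernel of a homomorphism of elementary abelian groups);
(5) the map is surjective. -/
theorem stmt4 {p : ℕ} (hp : p.Prime) {N : Type*} [Group N] (ω : N → ℝ≥0∞)
    (hω : IsPValuation p ω) (N₁ N₂ N₃ : Subgroup N)
    (hbij : Function.Bijective
      (fun t : ↥N₁ × ↥N₂ × ↥N₃ => ((t.1 : N) * ((t.2.1 : N) * (t.2.2 : N)))))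
    (hmin : ∀ n₁ ∈ N₁, ∀ n₂ ∈ N₂, ∀ n₃ ∈ N₃,
      ω (n₁ * (n₂ * n₃)) = min (ω n₁) (min (ω n₂) (ω n₃)))
    (v : ℝ≥0∞) (hv0 : 0 < v) (hvtop : v < ⊤) :
    -- (1) well-definedness
    (∀ x₁ ∈ N₁, ∀ x₂ ∈ N₂, ∀ x₃ ∈ N₃, ∀ z₁ ∈ N₁, ∀ z₂ ∈ N₂, ∀ z₃ ∈ N₃,
      v ≤ ω x₁ → v ≤ ω x₂ → v ≤ ω x₃ → v < ω z₁ → v < ω z₂ → v < ω z₃ →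
        v < ω ((x₁ * (x₂ * x₃))⁻¹ * ((x₁ * z₁) * ((x₂ * z₂) * (x₃ * z₃))))) ∧
    -- (2) additivity
    (∀ x₁ ∈ N₁, ∀ x₂ ∈ N₂, ∀ x₃ ∈ N₃, ∀ y₁ ∈ N₁, ∀ y₂ ∈ N₂, ∀ y₃ ∈ N₃,
      v ≤ ω x₁ → v ≤ ω x₂ → v ≤ ω x₃ → v ≤ ω y₁ → v ≤ ω y₂ → v ≤ ω y₃ →
        v < ω (((x₁ * (x₂ * x₃)) * (y₁ * (y₂ * y₃)))⁻¹ *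
          ((x₁ * y₁) * ((x₂ * y₂) * (x₃ * y₃))))) ∧
    -- (3) compatibility with π (π[x] = [xᵖ]), giving 𝔽_p[π]-linearity of the sum over v
    (∀ x₁ ∈ N₁, ∀ x₂ ∈ N₂, ∀ x₃ ∈ N₃,
      v ≤ ω x₁ → v ≤ ω x₂ → v ≤ ω x₃ →
        v + 1 < ω (((x₁ * (x₂ * x₃)) ^ p)⁻¹ * (x₁ ^ p * (x₂ ^ p * x₃ ^ p)))) ∧
    -- (4) injectivity
    (∀ x₁ ∈ N₁, ∀ x₂ ∈ N₂, ∀ x₃ ∈ N₃,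
      v ≤ ω x₁ → v ≤ ω x₂ → v ≤ ω x₃ → v < ω (x₁ * (x₂ * x₃)) →
        v < ω x₁ ∧ v < ω x₂ ∧ v < ω x₃) ∧
    -- (5) surjectivity
    (∀ n : N, v ≤ ω n → ∃ x₁ ∈ N₁, ∃ x₂ ∈ N₂, ∃ x₃ ∈ N₃,
      v ≤ ω x₁ ∧ v ≤ ω x₂ ∧ v ≤ ω x₃ ∧ v < ω ((x₁ * (x₂ * x₃))⁻¹ * n)) := by
  have hv₁ : v + 1 < ⊤ := ENNReal.add_lt_top.2 ⟨hvtop, ENNReal.one_lt_top⟩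
  refine ⟨fun x₁ _ x₂ _ x₃ _ z₁ _ z₂ _ z₃ _ _ _ _ h₁ h₂ h₃ =>
      (hω.lt_map_inv_mul_iff hvtop).2 ?_,
    fun x₁ _ x₂ _ x₃ _ y₁ _ y₂ _ y₃ _ hx₁ hx₂ hx₃ hy₁ hy₂ hy₃ =>
      (hω.lt_map_inv_mul_iff hvtop).2 ?_,
    fun x₁ _ x₂ _ x₃ _ hx₁ hx₂ hx₃ => (hω.lt_map_inv_mul_iff hv₁).2 ?_,
    fun x₁ h₁ x₂ h₂ x₃ h₃ _ _ _ h => by simpa [hmin x₁ h₁ x₂ h₂ x₃ h₃] using h,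
    fun n hn => ?_⟩
  · simp only [QuotientGroup.mk_mul, hω.mk_eq_one hvtop h₁, hω.mk_eq_one hvtop h₂,
      hω.mk_eq_one hvtop h₃, mul_one]
  · have hc {x y : N} (hx : v ≤ ω x) (hy : v ≤ ω y) := hω.commute_mk hv0 hvtop hx hy
    simp only [QuotientGroup.mk_mul]
    rw [((hc hx₂ hy₁).mul_left (hc hx₃ hy₁)).mul_mul_mul_comm, (hc hx₃ hy₂).mul_mul_mul_comm]
  · have hx₂₃ : v ≤ ω (x₂ * x₃) := (le_min hx₂ hx₃).trans (hω.min_le_map_mul x₂ x₃)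
    rw [hω.mk_mul_pow hp hv0 hv₁ hx₁ hx₂₃, QuotientGroup.mk_mul, hω.mk_mul_pow hp hv0 hv₁ hx₂ hx₃,
      ← QuotientGroup.mk_mul]
  · obtain ⟨⟨x₁, x₂, x₃⟩, rfl⟩ := hbij.2 n
    obtain ⟨h₁, h₂, h₃⟩ : v ≤ ω x₁ ∧ v ≤ ω x₂ ∧ v ≤ ω x₃ := by
      simpa [hmin _ x₁.2 _ x₂.2 _ x₃.2] using hn
    exact ⟨x₁, x₁.2, x₂, x₂.2, x₃, x₃.2, h₁, h₂, h₃, by simpa [hω.map_one] using hvtop⟩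
end

section
/- Let p be a prime and let (H, ω) be a saturated p-valued group, so that the set H^p of p-th powers is a subgroup of H; equip H^p with the restriction of ω. Then for every v > 0 the image of gr_{v+1}(H^p) in gr_{v+1}H under the map induced by the inclusion H^p ⊆ H equals π · gr_v H. Consequently, the inclusion H^p ⊆ H induces the zero map 𝔽_p ⊗_{𝔽_p[π]} gr(H^p) → 𝔽_p ⊗_{𝔽_p[π]} gr H, where 𝔽_p[π] → 𝔽_p is the map sending π to 0. -/
/-!
Every element of `Hᵖ` is some `yᵖ`, and `ω (yᵖ) = ω y + 1`; so the class of `yᵖ` in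
`gr_{v+1} H` is exactly `π` applied to the class of `y` in `gr_v H`, and `yᵖ` itself
witnesses both inclusions.
-/

open scoped ENNReal

/-- `(H, ω)` is saturated if every `x` with `ω x > p/(p-1)` is a `p`-th power. -/
def IsSaturated (p : ℕ) {H : Type*} [Group H] (ω : H → ℝ≥0∞) : Prop :=
  ∀ x : H, (p : ℝ≥0∞) / ((p : ℝ≥0∞) - 1) < ω x → ∃ y : H, x = y ^ p

namespace IsPValuation

variable {p : ℕ} {N : Type*} [Group N] {ω : N → ℝ≥0∞}

theorem apply_one (hω : IsPValuation p ω) : ω 1 = ⊤ :=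
  (hω.eq_top_iff 1).mpr rfl

theorem lt_apply_inv_mul_self (hω : IsPValuation p ω) {w : ℝ≥0∞} (hw : w < ⊤) (x : N) :
    w < ω (x⁻¹ * x) := by
  rwa [inv_mul_cancel, hω.apply_one]

theorem add_one_le_apply_pow_iff (hω : IsPValuation p ω) (v : ℝ≥0∞) (y : N) :
    v + 1 ≤ ω (y ^ p) ↔ v ≤ ω y := by
  rw [hω.pow_p]
  exact ENNReal.add_le_add_iff_right ENNReal.one_ne_top

end IsPValuation

theorem stmt5_general {p : ℕ} {H : Type*} [Group H] (ω : H → ℝ≥0∞)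
    (hω : IsPValuation p ω) :
    -- (a)
    (∀ v : ℝ≥0∞, 0 < v → v < ⊤ →
      (∀ x : H, (∃ y : H, x = y ^ p) → v + 1 ≤ ω x →
        ∃ y : H, v ≤ ω y ∧ v + 1 < ω ((y ^ p)⁻¹ * x)) ∧
      (∀ y : H, v ≤ ω y → (∃ z : H, y ^ p = z ^ p) ∧ v + 1 ≤ ω (y ^ p))) ∧
    -- (b)
    (∀ w : ℝ≥0∞, 0 < w → w < ⊤ →
      ∀ x : H, (∃ y : H, x = y ^ p) → w ≤ ω x →
        ∃ y : H, w ≤ ω y + 1 ∧ w < ω ((y ^ p)⁻¹ * x)) := by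
  refine ⟨fun v _ hv => ⟨?_, ?_⟩, ?_⟩
  · rintro x ⟨y, rfl⟩ hx
    exact ⟨y, (hω.add_one_le_apply_pow_iff v y).mp hx,
      hω.lt_apply_inv_mul_self (ENNReal.add_lt_top.mpr ⟨hv, ENNReal.one_lt_top⟩) _⟩
  · exact fun y hy => ⟨⟨y, rfl⟩, (hω.add_one_le_apply_pow_iff v y).mpr hy⟩
  · rintro w _ hw x ⟨y, rfl⟩ hx
    exact ⟨y, hω.pow_p y ▸ hx, hω.lt_apply_inv_mul_self hw _⟩

/-- Let `(H, ω)` be a saturated `p`-valued group, and let `Hᵖ = {yᵖ : y ∈ H}`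
(a subgroup, by saturation) carry the restricted `p`-valuation.  Then:

(a) for every `0 < v < ∞`, the image of `gr_{v+1}(Hᵖ)` in `gr_{v+1} H` equals `π · gr_v H`.
    Elementwise (recall `gr_w H = H_w/H_{w+}` with `H_w = {x | w ≤ ω x}`,
    `H_{w+} = {x | w < ω x}`, and `π[y] = [yᵖ]`):
    (⊆) every `x ∈ Hᵖ` with `v + 1 ≤ ω x` satisfies `[x] = π [y] = [yᵖ]` in `gr_{v+1} H`
        for some `y ∈ H` with `v ≤ ω y`, i.e. `(yᵖ)⁻¹x ∈ H_{(v+1)+}`;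
    (⊇) conversely, for every `y ∈ H` with `v ≤ ω y`, the element `yᵖ` lies in `Hᵖ` and
        has `v + 1 ≤ ω (yᵖ)` (so `π[y]` is the image of a class of `gr_{v+1}(Hᵖ)`).

(b) Consequently the inclusion `Hᵖ ⊆ H` induces the zero map
    `𝔽_p ⊗_{𝔽_p[π]} gr (Hᵖ) → 𝔽_p ⊗_{𝔽_p[π]} gr H` (where `π ↦ 0`); elementwise: for every
    `0 < w < ∞`, the image in `gr_w H` of any class of `gr_w (Hᵖ)` lies in `π · gr H`,
    i.e. every `x ∈ Hᵖ` with `w ≤ ω x` satisfies `[x] = [yᵖ]` in `gr_w H` for some `y ∈ H`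
    with `w ≤ ω y + 1`. -/
theorem stmt5 {p : ℕ} (hp : p.Prime) {H : Type*} [Group H] (ω : H → ℝ≥0∞)
    (hω : IsPValuation p ω) (hsat : IsSaturated p ω) :
    -- (a)
    (∀ v : ℝ≥0∞, 0 < v → v < ⊤ →
      (∀ x : H, (∃ y : H, x = y ^ p) → v + 1 ≤ ω x →
        ∃ y : H, v ≤ ω y ∧ v + 1 < ω ((y ^ p)⁻¹ * x)) ∧
      (∀ y : H, v ≤ ω y → (∃ z : H, y ^ p = z ^ p) ∧ v + 1 ≤ ω (y ^ p))) ∧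
    -- (b)
    (∀ w : ℝ≥0∞, 0 < w → w < ⊤ →
      ∀ x : H, (∃ y : H, x = y ^ p) → w ≤ ω x →
        ∃ y : H, w ≤ ω y + 1 ∧ w < ω ((y ^ p)⁻¹ * x)) :=
  stmt5_general ω hω
end
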